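/- arXiv:2409.04277 — 2 statements merged into one kernel-verified Lean document; each statement's English description precedes it below -/
import Mathlib

section
/- Let N ≥ 2 be an integer and R > 0. There exists a constant C ≥ 0 such that for all real numbers η_1, …, η_N with |η_k| ≤ R for every k, one has |f(1 − Σ_{k=1}^N η_k) − Σ_{k=1}^N f(1 − η_k)| ≤ C (S^{2,N} + B^N)(|η_1|, …, |η_N|). -/
/-!
Write `F(y) = f(1 - y) - f(1)`. The second difference `F(a + b) - F(a) - F(b)` is bounded by
`sup |f''| · |a| |b|` (mean value theorem applied twice), and peeling off one `η_k` at a time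
turns this into `|F(Σ η_k) - Σ F(η_k)| ≤ sup |f''| · Σ_{i<j} |η_i| |η_j|`, with the supremum
taken over the compact ball `|y - 1| ≤ Σ |η_k| ≤ N R`.
-/

open Metric

theorem abs_sub_deriv_le_of_abs_deriv_deriv_le {f : ℝ → ℝ} (hf : ContDiff ℝ 2 f) {x r M : ℝ}
    (hM : ∀ y ∈ closedBall x r, |deriv (deriv f) y| ≤ M) {y z : ℝ}
    (hy : y ∈ closedBall x r) (hz : z ∈ closedBall x r) :
    |deriv f z - deriv f y| ≤ M * |z - y| := by
  have hd : Differentiable ℝ (deriv f) := (hf.deriv' (n := 1)).differentiable one_ne_zero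
  simpa only [Real.norm_eq_abs] using (convex_closedBall x r).norm_image_sub_le_of_norm_deriv_le
    (f := deriv f) (fun w _ => hd w) hM hy hz

theorem abs_second_difference_le {f : ℝ → ℝ} (hf : ContDiff ℝ 2 f) {x r M : ℝ}
    (hM : ∀ y ∈ closedBall x r, |deriv (deriv f) y| ≤ M) {a b : ℝ} (hab : |a| + |b| ≤ r) :
    |f (x - a - b) - f (x - a) - f (x - b) + f x| ≤ M * (|a| * |b|) := by
  have hd : Differentiable ℝ f := hf.differentiable (by norm_num)
  set φ : ℝ → ℝ := fun t => f (x - a - t) - f (x - t)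
  have hφ : ∀ t, HasDerivAt φ (deriv f (x - t) - deriv f (x - a - t)) t := by
    intro t
    have h₁ := (hd (x - a - t)).hasDerivAt.comp t ((hasDerivAt_id t).const_sub (x - a))
    have h₂ := (hd (x - t)).hasDerivAt.comp t ((hasDerivAt_id t).const_sub x)
    exact (h₁.sub h₂).congr_deriv (by ring)
  have hbound : ∀ t ∈ closedBall 0 |b|,
      ‖deriv f (x - t) - deriv f (x - a - t)‖ ≤ M * |a| := by
    intro t ht
    rw [mem_closedBall, dist_zero_right, Real.norm_eq_abs] at ht
    have h₁ : x - t ∈ closedBall x r := by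
      rw [mem_closedBall, Real.dist_eq, sub_sub_cancel_left, abs_neg]
      linarith [abs_nonneg a]
    have h₂ : x - a - t ∈ closedBall x r := by
      rw [mem_closedBall, Real.dist_eq, show x - a - t - x = -(a + t) by ring, abs_neg]
      linarith [abs_add_le a t]
    simpa [Real.norm_eq_abs] using abs_sub_deriv_le_of_abs_deriv_deriv_le hf hM h₂ h₁
  have hmvt := (convex_closedBall (0 : ℝ) |b|).norm_image_sub_le_of_norm_hasDerivWithin_le
    (fun t _ => (hφ t).hasDerivWithinAt) hbound (mem_closedBall_self (abs_nonneg b))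
    (by rw [mem_closedBall, dist_zero_right, Real.norm_eq_abs])
  calc |f (x - a - b) - f (x - a) - f (x - b) + f x| = ‖φ b - φ 0‖ := by
        simp only [φ, Real.norm_eq_abs, sub_zero]
        ring_nf
    _ ≤ M * |a| * ‖b - 0‖ := hmvt
    _ = M * (|a| * |b|) := by rw [sub_zero, Real.norm_eq_abs, mul_assoc]

theorem Finset.sum_sum_ite_lt_insert_of_forall_lt {ι M : Type*} [LinearOrder ι]
    [AddCommMonoid M] (g : ι → ι → M) {s : Finset ι} {a : ι} (ha : ∀ i ∈ s, i < a) :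
    (∑ i ∈ insert a s, ∑ j ∈ insert a s, if i < j then g i j else 0) =
      (∑ i ∈ s, ∑ j ∈ s, if i < j then g i j else 0) + ∑ i ∈ s, g i a := by
  have has : a ∉ s := fun h => lt_irrefl a (ha a h)
  simp only [Finset.sum_insert has, lt_irrefl, if_false, Finset.sum_add_distrib]
  rw [Finset.sum_eq_zero fun j hj => if_neg (ha j hj).not_gt,
    Finset.sum_congr rfl fun i hi => if_pos (ha i hi)]
  abel

theorem abs_sub_sum_le_sum_sum_ite_lt {ι : Type*} [LinearOrder ι] {f : ℝ → ℝ}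
    (hf : ContDiff ℝ 2 f) (η : ι → ℝ) (s : Finset ι) {x M : ℝ}
    (hM : ∀ y ∈ closedBall x (∑ k ∈ s, |η k|), |deriv (deriv f) y| ≤ M) :
    |f (x - ∑ k ∈ s, η k) - f x - ∑ k ∈ s, (f (x - η k) - f x)| ≤
      M * ∑ i ∈ s, ∑ j ∈ s, if i < j then |η i| * |η j| else 0 := by
  induction s using Finset.induction_on_max with
  | empty => simp
  | insert a s ha ih =>
    have has : a ∉ s := fun h => lt_irrefl a (ha a h)
    rw [Finset.sum_insert has] at hM
    have hMs : ∀ y ∈ closedBall x (∑ k ∈ s, |η k|), |deriv (deriv f) y| ≤ M :=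
      fun y hy => hM y (closedBall_subset_closedBall (by linarith [abs_nonneg (η a)]) hy)
    have hsum : |∑ k ∈ s, η k| ≤ ∑ k ∈ s, |η k| := Finset.abs_sum_le_sum_abs _ _
    have hstep := abs_second_difference_le hf hM (a := ∑ k ∈ s, η k) (b := η a)
      (by linarith)
    have hM0 : 0 ≤ M := (abs_nonneg _).trans (hM x (mem_closedBall_self (by positivity)))
    rw [Finset.sum_insert has, Finset.sum_insert has,
      Finset.sum_sum_ite_lt_insert_of_forall_lt _ ha, ← Finset.sum_mul]
    calc |f (x - (η a + ∑ k ∈ s, η k)) - f x - (f (x - η a) - f x + ∑ k ∈ s, (f (x - η k) - f x))|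
        = |(f (x - ∑ k ∈ s, η k - η a) - f (x - ∑ k ∈ s, η k) - f (x - η a) + f x)
            + (f (x - ∑ k ∈ s, η k) - f x - ∑ k ∈ s, (f (x - η k) - f x))| := by ring_nf
      _ ≤ M * (|∑ k ∈ s, η k| * |η a|)
            + M * ∑ i ∈ s, ∑ j ∈ s, if i < j then |η i| * |η j| else 0 :=
        (abs_add_le _ _).trans (add_le_add hstep (ih hMs))
      _ ≤ M * ((∑ k ∈ s, |η k|) * |η a|)
            + M * ∑ i ∈ s, ∑ j ∈ s, if i < j then |η i| * |η j| else 0 := by gcongr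
      _ = _ := by ring

theorem stmt_8_general (f : ℝ → ℝ) (hf : ContDiff ℝ 3 f) (hf1 : f 1 = 0)
    (N : ℕ) (R : ℝ) :
    ∃ C : ℝ, 0 ≤ C ∧ ∀ η : Fin N → ℝ, (∀ k, |η k| ≤ R) →
      |f (1 - ∑ k, η k) - ∑ k, f (1 - η k)| ≤
        C * ((∑ i : Fin N, ∑ j : Fin N, if i < j then |η i| * |η j| else 0)
          + (∑ i : Fin N, ∑ j : Fin N, if j ≠ i then |η i| ^ 2 * |η j| else 0)) := by
  have hf2 : ContDiff ℝ 2 f := hf.of_le (by norm_num)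
  obtain ⟨M, hM⟩ := (isCompact_closedBall (1 : ℝ) (N * R)).exists_bound_of_continuousOn
    (hf2.deriv'.continuous_deriv le_rfl).continuousOn
  refine ⟨max M 0, le_max_right _ _, fun η hη => ?_⟩
  have hradius : ∑ k, |η k| ≤ N * R := by
    simpa using Finset.sum_le_sum fun k (_ : k ∈ Finset.univ) => hη k
  have hB : 0 ≤ ∑ i : Fin N, ∑ j : Fin N, if j ≠ i then |η i| ^ 2 * |η j| else 0 :=
    Finset.sum_nonneg fun i _ => Finset.sum_nonneg fun j _ => by split_ifs <;> positivity
  have hS := abs_sub_sum_le_sum_sum_ite_lt hf2 η Finset.univ (x := 1) (M := max M 0)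
    fun y hy => (hM y (closedBall_subset_closedBall hradius hy)).trans (le_max_left _ _)
  simp only [hf1, sub_zero] at hS
  exact hS.trans (by gcongr; linarith)

/-- Expansion of `f(1 - Ση_k) - Σf(1 - η_k)` in terms of `S^{2,N}` and `B^N`. -/
theorem stmt_8 (f : ℝ → ℝ) (hf : ContDiff ℝ 3 f) (hf1 : f 1 = 0)
    (N : ℕ) (hN : 2 ≤ N) (R : ℝ) (hR : 0 < R) :
    ∃ C : ℝ, 0 ≤ C ∧ ∀ η : Fin N → ℝ, (∀ k, |η k| ≤ R) →
      |f (1 - ∑ k, η k) - ∑ k, f (1 - η k)| ≤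
        C * ((∑ i : Fin N, ∑ j : Fin N, if i < j then |η i| * |η j| else 0)
          + (∑ i : Fin N, ∑ j : Fin N, if j ≠ i then |η i| ^ 2 * |η j| else 0)) :=
  stmt_8_general f hf hf1 N R
end

section
/- Assume k := 2 f''(1) + 6 f'(1) ≠ 0. Let 0 < c₀ < c_s and let ξ : (c₀, c_s) → (0,1) satisfy N_c(ξ(c)) = 0 for every c ∈ (c₀, c_s) and ξ(c) → 0 as c → c_s⁻. Then ∂_x N_c(ξ(c))/ν_c⁴ → −3/k and ∂_x² N_c(ξ(c))/ν_c² → 4 as c → c_s⁻, where ∂_x N_c(x) = 2c²x + 4F(1−x) − 4(1−x) f(1−x) and ∂_x² N_c(x) = 2c² + 8 f(1−x) + 4(1−x) f'(1−x) denote the first and second derivatives of N_c in the variable x. -/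
/-!
Taylor expansion of `f`, `f'` and `F` at `1` gives, as `x → 0⁺`,
`N_{c_s}(x) = -(k/3) x³ + o(x³)`, `∂ₓN_{c_s}(x) = -k x² + o(x²)` and `∂ₓ²N_{c_s}(x) = -2k x + o(x)`.
Since `N_c(x) = N_{c_s}(x) - ν_c² x²`, the equation `N_c(ξ) = 0` reads `ν_c² ξ² = N_{c_s}(ξ)`, so
`ξ / ν_c² → -3/k`. Substituting this into `∂ₓN_c(ξ) = ∂ₓN_{c_s}(ξ) - 2ν_c² ξ` and
`∂ₓ²N_c(ξ) = ∂ₓ²N_{c_s}(ξ) - 2ν_c²` gives both limits.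
-/

open Real MeasureTheory Filter Topology

open Set Asymptotics

section Taylor

variable {s : Set ℝ} {x₀ b : ℝ} {F f f' : ℝ → ℝ}

theorem isLittleO_taylor_two (hs : Convex ℝ s) (hx₀ : x₀ ∈ s)
    (hf : ∀ x ∈ s, HasDerivWithinAt f (f' x) s x) (hf' : HasDerivWithinAt f' b s x₀) :
    (fun x => f x - f x₀ - f' x₀ * (x - x₀) - b / 2 * (x - x₀) ^ 2) =o[𝓝[s] x₀]
      fun x => (x - x₀) ^ 2 := by
  have hderiv : ∀ x ∈ s, HasDerivWithinAt
      (fun x => f x - f' x₀ * (x - x₀) - b / 2 * (x - x₀) ^ 2)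
      (f' x - f' x₀ - b * (x - x₀)) s x := by
    intro x hx
    have hlin := (((hasDerivAt_id' x).sub_const x₀).const_mul (f' x₀)).hasDerivWithinAt (s := s)
    have hsq :=
      ((((hasDerivAt_id' x).sub_const x₀).pow 2).const_mul (b / 2)).hasDerivWithinAt (s := s)
    refine (((hf x hx).sub hlin).sub hsq).congr_deriv ?_
    ring
  exact (hs.isLittleO_pow_succ_real hx₀ hderiv
    (by simpa [mul_comm] using hf'.isLittleO)).congr_left fun x => by ring

theorem isLittleO_taylor_three (hs : Convex ℝ s) (hx₀ : x₀ ∈ s)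
    (hF : ∀ x ∈ s, HasDerivWithinAt F (f x) s x)
    (hf : ∀ x ∈ s, HasDerivWithinAt f (f' x) s x) (hf' : HasDerivWithinAt f' b s x₀) :
    (fun x => F x - F x₀ - f x₀ * (x - x₀) - f' x₀ / 2 * (x - x₀) ^ 2 - b / 6 * (x - x₀) ^ 3)
      =o[𝓝[s] x₀] fun x => (x - x₀) ^ 3 := by
  have hderiv : ∀ x ∈ s, HasDerivWithinAt
      (fun x => F x - f x₀ * (x - x₀) - f' x₀ / 2 * (x - x₀) ^ 2 - b / 6 * (x - x₀) ^ 3)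
      (f x - f x₀ - f' x₀ * (x - x₀) - b / 2 * (x - x₀) ^ 2) s x := by
    intro x hx
    have hlin := (((hasDerivAt_id' x).sub_const x₀).const_mul (f x₀)).hasDerivWithinAt (s := s)
    have hsq :=
      ((((hasDerivAt_id' x).sub_const x₀).pow 2).const_mul (f' x₀ / 2)).hasDerivWithinAt (s := s)
    have hcube :=
      ((((hasDerivAt_id' x).sub_const x₀).pow 3).const_mul (b / 6)).hasDerivWithinAt (s := s)
    refine ((((hF x hx).sub hlin).sub hsq).sub hcube).congr_deriv ?_
    ring
  exact (hs.isLittleO_pow_succ_real hx₀ hderiv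
    ((isLittleO_taylor_two hs hx₀ hf hf').congr_left fun x => by ring)).congr_left
    fun x => by ring

end Taylor

theorem tendsto_div_pow_comp_one_sub {R : ℝ → ℝ} {n : ℕ}
    (h : R =o[𝓝[Icc 0 1] 1] fun r => (r - 1) ^ n) :
    Tendsto (fun x => R (1 - x) / x ^ n) (𝓝[>] 0) (𝓝 0) := by
  have hmap : Tendsto (fun x : ℝ => 1 - x) (𝓝[>] 0) (𝓝[Icc 0 1] 1) := by
    refine tendsto_nhdsWithin_iff.mpr ⟨?_, ?_⟩
    · simpa using ((continuous_sub_left (1 : ℝ)).tendsto 0).mono_left nhdsWithin_le_nhds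
    · filter_upwards [Ioo_mem_nhdsGT one_pos] with x hx
      exact ⟨by linarith [hx.2], by linarith [hx.1]⟩
  refine ((h.comp_tendsto hmap).norm_right.congr' EventuallyEq.rfl ?_).tendsto_div_nhds_zero
  filter_upwards [self_mem_nhdsWithin] with x (hx : 0 < x)
  simp [abs_of_pos hx]

theorem hasDerivAt_intervalIntegral_left_of_continuousOn {f : ℝ → ℝ} {U : Set ℝ} (hU : IsOpen U)
    (hf : ContinuousOn f U) {r b : ℝ} (hr : uIcc r b ⊆ U) :
    HasDerivAt (fun u => ∫ x in u..b, f x) (-f r) r :=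
  intervalIntegral.integral_hasDerivAt_left ((hf.mono hr).intervalIntegrable)
    (hf.stronglyMeasurableAtFilter hU r (hr left_mem_uIcc))
    (hf.continuousAt (hU.mem_nhds (hr left_mem_uIcc)))

theorem ContDiffOn.hasDerivWithinAt_of_isOpen {f : ℝ → ℝ} {U s : Set ℝ}
    (hf : ContDiffOn ℝ 1 f U) (hU : IsOpen U) (hsU : s ⊆ U) {r : ℝ} (hr : r ∈ s) :
    HasDerivWithinAt f (deriv f r) s r :=
  ((hf.differentiableOn one_ne_zero).differentiableAt
    (hU.mem_nhds (hsU hr))).hasDerivAt.hasDerivWithinAt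

section LeftExpansions

variable {f F : ℝ → ℝ}

theorem tendsto_deriv_taylor_one_left
    (hf' : HasDerivWithinAt (deriv f) (deriv (deriv f) 1) (Icc 0 1) 1) :
    Tendsto (fun x => (deriv f (1 - x) - deriv f 1 + deriv (deriv f) 1 * x) / x)
      (𝓝[>] 0) (𝓝 0) := by
  refine (tendsto_div_pow_comp_one_sub (n := 1) (by simpa [mul_comm] using hf'.isLittleO)).congr
    fun x => ?_
  ring

theorem tendsto_taylor_two_left (hf1 : f 1 = 0)
    (hf : ∀ r ∈ Icc (0 : ℝ) 1, HasDerivWithinAt f (deriv f r) (Icc 0 1) r)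
    (hf' : HasDerivWithinAt (deriv f) (deriv (deriv f) 1) (Icc 0 1) 1) :
    Tendsto (fun x => (f (1 - x) + deriv f 1 * x - deriv (deriv f) 1 / 2 * x ^ 2) / x ^ 2)
      (𝓝[>] 0) (𝓝 0) := by
  refine (tendsto_div_pow_comp_one_sub
    (isLittleO_taylor_two (convex_Icc 0 1) (right_mem_Icc.2 zero_le_one) hf hf')).congr
    fun x => ?_
  rw [hf1]; ring

theorem tendsto_taylor_three_left (hf1 : f 1 = 0) (hF1 : F 1 = 0)
    (hF : ∀ r ∈ Icc (0 : ℝ) 1, HasDerivWithinAt F (-f r) (Icc 0 1) r)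
    (hf : ∀ r ∈ Icc (0 : ℝ) 1, HasDerivWithinAt f (deriv f r) (Icc 0 1) r)
    (hf' : HasDerivWithinAt (deriv f) (deriv (deriv f) 1) (Icc 0 1) 1) :
    Tendsto (fun x =>
        (F (1 - x) + deriv f 1 / 2 * x ^ 2 - deriv (deriv f) 1 / 6 * x ^ 3) / x ^ 3)
      (𝓝[>] 0) (𝓝 0) := by
  refine (tendsto_div_pow_comp_one_sub
    (isLittleO_taylor_three (f := fun r => -f r) (f' := fun r => -deriv f r)
      (convex_Icc 0 1) (right_mem_Icc.2 zero_le_one) hF (fun r hr => (hf r hr).neg)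
      hf'.neg)).congr fun x => ?_
  rw [hf1, hF1]; ring

end LeftExpansions

/-- `N_c(x)`, with `dNc` and `d2Nc` its first and second derivatives in `x`. -/
def Nc (F : ℝ → ℝ) (c x : ℝ) : ℝ := c ^ 2 * x ^ 2 - 4 * (1 - x) * F (1 - x)

def dNc (F f : ℝ → ℝ) (c x : ℝ) : ℝ := 2 * c ^ 2 * x + 4 * F (1 - x) - 4 * (1 - x) * f (1 - x)

noncomputable def d2Nc (f : ℝ → ℝ) (c x : ℝ) : ℝ :=
  2 * c ^ 2 + 8 * f (1 - x) + 4 * (1 - x) * deriv f (1 - x)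

section AtSpeedOfSound

variable {f F : ℝ → ℝ} {a b cs : ℝ}

theorem tendsto_Nc_div_cube (hcs : cs ^ 2 = -(2 * a))
    (hF : Tendsto (fun x => (F (1 - x) + a / 2 * x ^ 2 - b / 6 * x ^ 3) / x ^ 3) (𝓝[>] 0) (𝓝 0)) :
    Tendsto (fun x => Nc F cs x / x ^ 3) (𝓝[>] 0) (𝓝 (-(2 * b + 6 * a) / 3)) := by
  have hx : Tendsto (fun x : ℝ => x) (𝓝[>] 0) (𝓝 0) := tendsto_id.mono_left nhdsWithin_le_nhds
  have hlim : Tendsto (fun x => -(2 * b + 6 * a) / 3 + 2 * b / 3 * x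
      + (4 * x - 4) * ((F (1 - x) + a / 2 * x ^ 2 - b / 6 * x ^ 3) / x ^ 3)) (𝓝[>] 0)
      (𝓝 (-(2 * b + 6 * a) / 3)) := by
    simpa using (tendsto_const_nhds.add (hx.const_mul _)).add
      (((hx.const_mul 4).sub tendsto_const_nhds).mul hF)
  refine hlim.congr' ?_
  filter_upwards [self_mem_nhdsWithin] with x (hx : 0 < x)
  rw [Nc, hcs]
  field_simp
  ring

theorem tendsto_dNc_div_sq (hcs : cs ^ 2 = -(2 * a))
    (hf : Tendsto (fun x => (f (1 - x) + a * x - b / 2 * x ^ 2) / x ^ 2) (𝓝[>] 0) (𝓝 0))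
    (hF : Tendsto (fun x => (F (1 - x) + a / 2 * x ^ 2 - b / 6 * x ^ 3) / x ^ 3) (𝓝[>] 0) (𝓝 0)) :
    Tendsto (fun x => dNc F f cs x / x ^ 2) (𝓝[>] 0) (𝓝 (-(2 * b + 6 * a))) := by
  have hx : Tendsto (fun x : ℝ => x) (𝓝[>] 0) (𝓝 0) := tendsto_id.mono_left nhdsWithin_le_nhds
  have hlim : Tendsto (fun x => -(2 * b + 6 * a) + 8 * b / 3 * x
      + 4 * x * ((F (1 - x) + a / 2 * x ^ 2 - b / 6 * x ^ 3) / x ^ 3)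
      + (4 * x - 4) * ((f (1 - x) + a * x - b / 2 * x ^ 2) / x ^ 2)) (𝓝[>] 0)
      (𝓝 (-(2 * b + 6 * a))) := by
    simpa using ((tendsto_const_nhds.add (hx.const_mul _)).add ((hx.const_mul 4).mul hF)).add
      (((hx.const_mul 4).sub tendsto_const_nhds).mul hf)
  refine hlim.congr' ?_
  filter_upwards [self_mem_nhdsWithin] with x (hx : 0 < x)
  rw [dNc, hcs]
  field_simp
  ring

theorem tendsto_d2Nc_div (hcs : cs ^ 2 = -(2 * a))
    (hf' : Tendsto (fun x => (deriv f (1 - x) - a + b * x) / x) (𝓝[>] 0) (𝓝 0))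
    (hf : Tendsto (fun x => (f (1 - x) + a * x - b / 2 * x ^ 2) / x ^ 2) (𝓝[>] 0) (𝓝 0)) :
    Tendsto (fun x => d2Nc f cs x / x) (𝓝[>] 0) (𝓝 (-2 * (2 * b + 6 * a))) := by
  have hx : Tendsto (fun x : ℝ => x) (𝓝[>] 0) (𝓝 0) := tendsto_id.mono_left nhdsWithin_le_nhds
  have hlim : Tendsto (fun x => -2 * (2 * b + 6 * a) + 8 * b * x
      + 8 * x * ((f (1 - x) + a * x - b / 2 * x ^ 2) / x ^ 2)
      + (4 - 4 * x) * ((deriv f (1 - x) - a + b * x) / x)) (𝓝[>] 0)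
      (𝓝 (-2 * (2 * b + 6 * a))) := by
    simpa using ((tendsto_const_nhds.add (hx.const_mul _)).add ((hx.const_mul 8).mul hf)).add
      ((tendsto_const_nhds.sub (hx.const_mul 4)).mul hf')
  refine hlim.congr' ?_
  filter_upwards [self_mem_nhdsWithin] with x (hx : 0 < x)
  rw [d2Nc, hcs]
  field_simp
  ring

end AtSpeedOfSound

section RatioLimits

variable {ι : Type*} {l : Filter ι} {x ν A B C : ι → ℝ} {k : ℝ}

theorem tendsto_div_of_eq_mul_sq (hk : k ≠ 0) (hx : ∀ᶠ i in l, x i ≠ 0)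
    (hAν : ∀ᶠ i in l, A i = ν i * x i ^ 2) (hA : Tendsto (fun i => A i / x i ^ 3) l (𝓝 (-k / 3))) :
    Tendsto (fun i => x i / ν i) l (𝓝 (-3 / k)) := by
  have hinv := hA.inv₀ (by simpa using hk)
  rw [show (-k / 3)⁻¹ = -3 / k by field_simp] at hinv
  refine hinv.congr' ?_
  filter_upwards [hx, hAν] with i hxi hAνi
  rw [hAνi, inv_div]
  rcases eq_or_ne (ν i) 0 with hν | hν
  · simp [hν]
  · field_simp

theorem tendsto_sub_div_sq_of_eq_mul_sq (hk : k ≠ 0) (hx : ∀ᶠ i in l, x i ≠ 0)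
    (hAν : ∀ᶠ i in l, A i = ν i * x i ^ 2) (hA : Tendsto (fun i => A i / x i ^ 3) l (𝓝 (-k / 3)))
    (hB : Tendsto (fun i => B i / x i ^ 2) l (𝓝 (-k))) :
    Tendsto (fun i => (B i - 2 * ν i * x i) / ν i ^ 2) l (𝓝 (-3 / k)) := by
  have hT := tendsto_div_of_eq_mul_sq hk hx hAν hA
  have hlim := (hB.mul (hT.pow 2)).sub (hT.const_mul 2)
  rw [show -k * (-3 / k) ^ 2 - 2 * (-3 / k) = -3 / k by field_simp; ring] at hlim
  refine hlim.congr' ?_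
  filter_upwards [hx] with i hxi
  rcases eq_or_ne (ν i) 0 with hν | hν
  · simp [hν]
  · field_simp

theorem tendsto_sub_div_of_eq_mul_sq (hk : k ≠ 0) (hx : ∀ᶠ i in l, x i ≠ 0)
    (hν : ∀ᶠ i in l, ν i ≠ 0) (hAν : ∀ᶠ i in l, A i = ν i * x i ^ 2)
    (hA : Tendsto (fun i => A i / x i ^ 3) l (𝓝 (-k / 3)))
    (hC : Tendsto (fun i => C i / x i) l (𝓝 (-2 * k))) :
    Tendsto (fun i => (C i - 2 * ν i) / ν i) l (𝓝 4) := by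
  have hlim := (hC.mul (tendsto_div_of_eq_mul_sq hk hx hAν hA)).sub_const 2
  rw [show -2 * k * (-3 / k) - 2 = 4 by field_simp; ring] at hlim
  refine hlim.congr' ?_
  filter_upwards [hx, hν] with i hxi hνi
  field_simp

end RatioLimits

/-- Asymptotics of the derivatives of `N_c` at its first zero:
`∂ₓN_c(ξ(c))/ν_c⁴ → -3/k` and `∂ₓ²N_c(ξ(c))/ν_c² → 4` as `c → c_s⁻`. -/
theorem stmt_14 (f : ℝ → ℝ) (U : Set ℝ) (hU : IsOpen U) (hUIcc : Set.Icc (0:ℝ) 1 ⊆ U)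
    (hf : ContDiffOn ℝ 3 f U) (hf1 : f 1 = 0) (hf'1 : deriv f 1 < 0)
    (cs k : ℝ) (hcs : cs = Real.sqrt (-(2 * deriv f 1)))
    (hk : k = 2 * deriv (deriv f) 1 + 6 * deriv f 1) (hk0 : k ≠ 0)
    (F : ℝ → ℝ) (hF : ∀ r, F r = ∫ ρ in r..1, f ρ)
    (c₀ : ℝ) (hc₀ : 0 < c₀) (hc₀cs : c₀ < cs)
    (ξ : ℝ → ℝ)
    (hξmem : ∀ c ∈ Set.Ioo c₀ cs, ξ c ∈ Set.Ioo (0:ℝ) 1)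
    (hzero : ∀ c ∈ Set.Ioo c₀ cs,
      c ^ 2 * (ξ c) ^ 2 - 4 * (1 - ξ c) * F (1 - ξ c) = 0)
    (hξ0 : Tendsto ξ (𝓝[<] cs) (𝓝 0)) :
    Tendsto (fun c => (2 * c ^ 2 * ξ c + 4 * F (1 - ξ c) - 4 * (1 - ξ c) * f (1 - ξ c))
        / (Real.sqrt (cs ^ 2 - c ^ 2)) ^ 4) (𝓝[<] cs) (𝓝 (-3 / k)) ∧
      Tendsto (fun c => (2 * c ^ 2 + 8 * f (1 - ξ c) + 4 * (1 - ξ c) * deriv f (1 - ξ c))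
        / (Real.sqrt (cs ^ 2 - c ^ 2)) ^ 2) (𝓝[<] cs) (𝓝 4) := by
  subst hk
  have hcs2 : cs ^ 2 = -(2 * deriv f 1) := by rw [hcs]; exact sq_sqrt (by linarith)
  have hf_deriv : ∀ r ∈ Icc (0 : ℝ) 1, HasDerivWithinAt f (deriv f r) (Icc 0 1) r :=
    fun r => (hf.of_le (by norm_num)).hasDerivWithinAt_of_isOpen hU hUIcc
  have hf'_deriv : HasDerivWithinAt (deriv f) (deriv (deriv f) 1) (Icc 0 1) 1 :=
    (hf.deriv_of_isOpen hU (by norm_num)).hasDerivWithinAt_of_isOpen hU hUIcc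
      (right_mem_Icc.2 zero_le_one)
  have hF_deriv : ∀ r ∈ Icc (0 : ℝ) 1, HasDerivWithinAt F (-f r) (Icc 0 1) r := fun r hr => by
    rw [funext hF]
    exact (hasDerivAt_intervalIntegral_left_of_continuousOn hU hf.continuousOn
      ((uIcc_subset_Icc hr (right_mem_Icc.2 zero_le_one)).trans hUIcc)).hasDerivWithinAt
  have hT2 := tendsto_taylor_two_left hf1 hf_deriv hf'_deriv
  have hT3 := tendsto_taylor_three_left hf1 (by simp [hF]) hF_deriv hf_deriv hf'_deriv
  have hc : ∀ᶠ c in 𝓝[<] cs, c ∈ Ioo c₀ cs := Ioo_mem_nhdsLT hc₀cs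
  have hξ : Tendsto ξ (𝓝[<] cs) (𝓝[>] 0) :=
    tendsto_nhdsWithin_iff.2 ⟨hξ0, hc.mono fun c hc => (hξmem c hc).1⟩
  have hν : ∀ᶠ c in 𝓝[<] cs, 0 < cs ^ 2 - c ^ 2 := hc.mono fun c hc => by nlinarith [hc.1, hc.2]
  have hx : ∀ᶠ c in 𝓝[<] cs, ξ c ≠ 0 := hc.mono fun c hc => (hξmem c hc).1.ne'
  have hAν : ∀ᶠ c in 𝓝[<] cs, Nc F cs (ξ c) = (cs ^ 2 - c ^ 2) * ξ c ^ 2 :=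
    hc.mono fun c hc => by rw [Nc]; linarith [hzero c hc]
  have hA := (tendsto_Nc_div_cube hcs2 hT3).comp hξ
  constructor
  · refine (tendsto_sub_div_sq_of_eq_mul_sq hk0 hx hAν hA
      ((tendsto_dNc_div_sq hcs2 hT2 hT3).comp hξ)).congr' ?_
    filter_upwards [hν] with c hνc
    rw [show (4 : ℕ) = 2 * 2 from rfl, pow_mul, sq_sqrt hνc.le, dNc]
    ring
  · refine (tendsto_sub_div_of_eq_mul_sq hk0 hx (hν.mono fun c h => h.ne') hAν hA
      ((tendsto_d2Nc_div hcs2 (tendsto_deriv_taylor_one_left hf'_deriv) hT2).comp hξ)).congr' ?_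
    filter_upwards [hν] with c hνc
    rw [sq_sqrt hνc.le, d2Nc]
    ring
end
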